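/- For every integer n ≥ 2 and all natural numbers k, l such that либо l < k or k + l is odd, one has ∫_{−1}^{1} P_k^{n+1}(t) · P_l^n(t) · (1−t²)^{(n−2)/2} dt = 0. -/

import Mathlib

/-!
Rodrigues' formula makes `P_l^n` a polynomial of degree `≤ l` on `(-1,1)`, and turns
`P_k^{n+1}(t) (1-t²)^{(n-2)/2}` into a multiple of `D^k[(1-t²)^{(n-2)/2+k}]`. Integrating by parts
`k` times moves all derivatives onto the polynomial, which they kill when `l < k`; the boundary
terms vanish because each `D^i[(1-t²)^c]` with `i < c` carries a factor `(1-t²)^{c-i}`.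
When `k + l` is odd the integrand is odd, since `P_k^n(-t) = (-1)^k P_k^n(t)`.
-/

/-- The Legendre polynomial `P_k^n` of dimension `n` and degree `k`, defined on `(-1,1)`
via Rodrigues' formula. -/
noncomputable def legendreP (n k : ℕ) (t : ℝ) : ℝ :=
  ((-1 : ℝ) ^ k / (2 ^ k * (ascPochhammer ℝ k).eval (((n : ℝ) - 1) / 2))) *
    (1 - t ^ 2) ^ (-(((n : ℝ) - 3) / 2)) *
    iteratedDeriv k (fun s : ℝ => (1 - s ^ 2) ^ (((n : ℝ) - 3) / 2 + (k : ℝ))) t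

open Polynomial MeasureTheory Set

/-- The polynomial factor in `D^i[(1-t²)^c] = (1-t²)^(c-i) · (rodriguesPoly c i)(t)`. -/
noncomputable def rodriguesPoly (c : ℝ) : ℕ → ℝ[X]
  | 0 => 1
  | i + 1 => C (-2 * (c - i)) * X * rodriguesPoly c i
      + (1 - X ^ 2) * derivative (rodriguesPoly c i)

noncomputable def rodriguesTerm (c : ℝ) (i : ℕ) (t : ℝ) : ℝ :=
  (1 - t ^ 2) ^ (c - i) * (rodriguesPoly c i).eval t

lemma natDegree_rodriguesPoly_le (c : ℝ) (i : ℕ) : (rodriguesPoly c i).natDegree ≤ i := by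
  induction i with
  | zero => simp [rodriguesPoly]
  | succ i ih =>
    set p := rodriguesPoly c i
    have hlin : (C (-2 * (c - i)) * X * p).natDegree ≤ i + 1 :=
      natDegree_mul_le.trans (by grw [natDegree_C_mul_le, natDegree_X_le, ih]; omega)
    have hquad : ((1 - X ^ 2) * derivative p).natDegree ≤ i + 1 := by
      rcases Nat.eq_zero_or_pos p.natDegree with hp | hp
      · simp [derivative_of_natDegree_zero hp]
      · have h2 : (1 - X ^ 2 : ℝ[X]).natDegree ≤ 2 := by compute_degree
        grw [natDegree_mul_le, h2, natDegree_derivative_le]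
        omega
    exact (natDegree_add_le _ _).trans (max_le hlin hquad)

lemma hasDerivAt_rodriguesTerm {c : ℝ} {i : ℕ} {t : ℝ}
    (h : 1 - t ^ 2 ≠ 0 ∨ (i : ℝ) + 1 ≤ c) :
    HasDerivAt (rodriguesTerm c i) (rodriguesTerm c (i + 1) t) t := by
  have hbase : HasDerivAt (fun s : ℝ => 1 - s ^ 2) (-(2 * t)) t := by
    simpa using (hasDerivAt_pow 2 t).const_sub 1
  have hpow := hbase.rpow_const (p := c - i) (h.imp_right fun h => by linarith)
  refine (hpow.mul ((rodriguesPoly c i).hasDerivAt t)).congr_deriv ?_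
  -- `(1-t²)^(c-i) = (1-t²)^(c-i-1) · (1-t²)`, also when `1 - t² = 0` since then `c - i ≥ 1`
  have hsplit : (1 - t ^ 2) ^ (c - i) = (1 - t ^ 2) ^ (c - i - 1) * (1 - t ^ 2) := by
    rcases eq_or_ne (1 - t ^ 2) 0 with h0 | h0
    · have : c - i ≠ 0 := by rcases h with h | h <;> [exact absurd h0 h; linarith]
      rw [h0, Real.zero_rpow this, mul_zero]
    · rw [← Real.rpow_add_one h0, sub_add_cancel]
  rw [rodriguesTerm, hsplit, Nat.cast_succ, ← sub_sub]
  simp only [rodriguesPoly, eval_add, eval_mul, eval_C, eval_X, eval_sub, eval_one, eval_pow]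
  ring

lemma iteratedDeriv_one_sub_sq_rpow (c : ℝ) (i : ℕ) {t : ℝ} (ht : t ∈ Ioo (-1) 1) :
    iteratedDeriv i (fun s : ℝ => (1 - s ^ 2) ^ c) t = rodriguesTerm c i t := by
  induction i generalizing t with
  | zero => simp [rodriguesTerm, rodriguesPoly]
  | succ i ih =>
    have hpos : 0 < 1 - t ^ 2 := by nlinarith [ht.1, ht.2]
    have heq : iteratedDeriv i (fun s : ℝ => (1 - s ^ 2) ^ c) =ᶠ[nhds t] rodriguesTerm c i :=
      Filter.eventually_of_mem (isOpen_Ioo.mem_nhds ht) fun s hs => ih hs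
    rw [iteratedDeriv_succ, heq.deriv_eq, (hasDerivAt_rodriguesTerm (Or.inl hpos.ne')).deriv]

lemma continuous_rodriguesTerm {c : ℝ} {i : ℕ} (h : (i : ℝ) ≤ c) :
    Continuous (rodriguesTerm c i) :=
  ((continuous_const.sub (continuous_pow 2)).rpow_const fun _ => Or.inr (by linarith)).mul
    (rodriguesPoly c i).continuous

lemma rodriguesTerm_eq_zero_of_sq_eq_one {c : ℝ} {i : ℕ} (h : (i : ℝ) < c) {t : ℝ}
    (ht : t ^ 2 = 1) : rodriguesTerm c i t = 0 := by
  rw [rodriguesTerm, ht, sub_self, Real.zero_rpow (by linarith), zero_mul]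

lemma integral_mul_rodriguesTerm_succ (S : ℝ[X]) {c : ℝ} {i : ℕ} (h : (i : ℝ) + 1 ≤ c) :
    ∫ t in (-1 : ℝ)..1, S.eval t * rodriguesTerm c (i + 1) t
      = -∫ t in (-1 : ℝ)..1, (derivative S).eval t * rodriguesTerm c i t := by
  have hcont : Continuous (rodriguesTerm c (i + 1)) :=
    continuous_rodriguesTerm (by push_cast; linarith)
  rw [intervalIntegral.integral_mul_deriv_eq_deriv_mul (fun x _ => S.hasDerivAt x)
      (fun x _ => hasDerivAt_rodriguesTerm (Or.inr h))
      ((derivative S).continuous.intervalIntegrable _ _) (hcont.intervalIntegrable _ _),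
    rodriguesTerm_eq_zero_of_sq_eq_one (by linarith) (by norm_num : (1 : ℝ) ^ 2 = 1),
    rodriguesTerm_eq_zero_of_sq_eq_one (by linarith) (by norm_num : (-1 : ℝ) ^ 2 = 1)]
  simp

lemma integral_mul_rodriguesTerm (S : ℝ[X]) {c : ℝ} {j : ℕ} (h : (j : ℝ) ≤ c) :
    ∫ t in (-1 : ℝ)..1, S.eval t * rodriguesTerm c j t
      = (-1) ^ j * ∫ t in (-1 : ℝ)..1, (derivative^[j] S).eval t * rodriguesTerm c 0 t := by
  induction j generalizing S with
  | zero => simp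
  | succ j ih =>
    push_cast at h
    rw [integral_mul_rodriguesTerm_succ S h, ih _ (by linarith), Function.iterate_succ_apply]
    ring

lemma integral_mul_rodriguesTerm_eq_zero {S : ℝ[X]} {c : ℝ} {j : ℕ} (hS : S.natDegree < j)
    (h : (j : ℝ) ≤ c) : ∫ t in (-1 : ℝ)..1, S.eval t * rodriguesTerm c j t = 0 := by
  simp [integral_mul_rodriguesTerm S h, iterate_derivative_eq_zero hS]

lemma exists_legendreP_mul_rpow_eq (m k : ℕ) : ∃ a : ℝ, ∀ t ∈ Ioo (-1 : ℝ) 1,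
    legendreP m k t * (1 - t ^ 2) ^ (((m : ℝ) - 3) / 2)
      = a * rodriguesTerm (((m : ℝ) - 3) / 2 + k) k t := by
  refine ⟨(-1) ^ k / (2 ^ k * (ascPochhammer ℝ k).eval (((m : ℝ) - 1) / 2)), fun t ht => ?_⟩
  have hpos : 0 < 1 - t ^ 2 := by nlinarith [ht.1, ht.2]
  have hcancel :
      (1 - t ^ 2) ^ (-(((m : ℝ) - 3) / 2)) * (1 - t ^ 2) ^ (((m : ℝ) - 3) / 2) = 1 := by
    rw [← Real.rpow_add hpos, neg_add_cancel, Real.rpow_zero]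
  rw [legendreP, iteratedDeriv_one_sub_sq_rpow _ _ ht, mul_right_comm, mul_assoc _ _ (_ ^ _),
    hcancel, mul_one]

lemma exists_polynomial_eqOn_legendreP (m k : ℕ) :
    ∃ p : ℝ[X], p.natDegree ≤ k ∧ EqOn (legendreP m k) p.eval (Ioo (-1) 1) := by
  obtain ⟨a, ha⟩ := exists_legendreP_mul_rpow_eq m k
  refine ⟨C a * rodriguesPoly (((m : ℝ) - 3) / 2 + k) k,
    (natDegree_C_mul_le _ _).trans (natDegree_rodriguesPoly_le _ _), fun t ht => ?_⟩
  have hpos : 0 < (1 - t ^ 2) ^ (((m : ℝ) - 3) / 2) :=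
    Real.rpow_pos_of_pos (by nlinarith [ht.1, ht.2]) _
  have := ha t ht
  rw [rodriguesTerm, add_sub_cancel_right] at this
  simp only [eval_mul, eval_C]
  nlinarith

lemma legendreP_neg (m k : ℕ) (t : ℝ) : legendreP m k (-t) = (-1) ^ k * legendreP m k t := by
  have h := iteratedDeriv_comp_neg k (fun s : ℝ => (1 - s ^ 2) ^ (((m : ℝ) - 3) / 2 + k)) (-t)
  simp only [neg_sq, neg_neg, smul_eq_mul] at h
  rw [legendreP, legendreP, neg_sq, h]
  ring

lemma Function.Odd.intervalIntegral_eq_zero {f : ℝ → ℝ} (hf : f.Odd) (a : ℝ) :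
    ∫ x in -a..a, f x = 0 := by
  have h := intervalIntegral.integral_comp_neg (a := -a) (b := a) f
  simp only [hf _, intervalIntegral.integral_neg, neg_neg] at h
  linarith

/-- if `l < k` or `k + l` is odd, then
`∫_{−1}^{1} P_k^{n+1}(t) P_l^n(t) (1−t²)^{(n−2)/2} dt = 0`. -/
theorem legendre_orthogonality (n : ℕ) (hn : 2 ≤ n) (k l : ℕ)
    (h : l < k ∨ Odd (k + l)) :
    ∫ t in (-1 : ℝ)..1,
        legendreP (n + 1) k t * legendreP n l t * (1 - t ^ 2) ^ (((n : ℝ) - 2) / 2) = 0 := by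
  rcases h with hlk | hodd
  · obtain ⟨a, ha⟩ := exists_legendreP_mul_rpow_eq (n + 1) k
    obtain ⟨p, hp, hP⟩ := exists_polynomial_eqOn_legendreP n l
    have hexp : (((n + 1 : ℕ) : ℝ) - 3) / 2 = ((n : ℝ) - 2) / 2 := by push_cast; ring
    rw [hexp] at ha
    have hn' : (2 : ℝ) ≤ n := by exact_mod_cast hn
    calc _ = ∫ t in (-1 : ℝ)..1, a * (p.eval t * rodriguesTerm (((n : ℝ) - 2) / 2 + k) k t) :=
          intervalIntegral.integral_congr_Ioo_of_le (by norm_num) fun t ht => by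
            rw [mul_right_comm, ha t ht, hP ht]; ring
      _ = 0 := by
        rw [intervalIntegral.integral_const_mul,
          integral_mul_rodriguesTerm_eq_zero (hp.trans_lt hlk) (by linarith), mul_zero]
  · refine Function.Odd.intervalIntegral_eq_zero (fun t => ?_) 1
    have hsign : (-1 : ℝ) ^ k * (-1) ^ l = -1 := by rw [← pow_add, hodd.neg_one_pow]
    simp only [legendreP_neg, neg_sq]
    linear_combination (legendreP (n + 1) k t * legendreP n l t *
      (1 - t ^ 2) ^ (((n : ℝ) - 2) / 2)) * hsign
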